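/- Let T > 0 and let G, g : [0,T] → ℝ satisfy G(t) ≤ g(t) for all t. Let F, u : [0,T] → ℝ be differentiable with F′(t) ≤ 2√(max(G(t) − F(t), 0)) and u′(t) = 2√(max(g(t) − u(t), 0)) for all t, and F(0) ≤ u(0). Then F(t) ≤ u(t) for all t ∈ [0,T]. -/
import Mathlib


/-- Comparison principle: if `G ≤ g` on `[0,T]`, `F` and `u` are differentiable with
`F′(t) ≤ 2 √(max (G t − F t) 0)` and `u′(t) = 2 √(max (g t − u t) 0)` on `[0,T]`, and
`F 0 ≤ u 0`, then `F ≤ u` on `[0,T]`. -/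
theorem stmt11 (T : ℝ) (hT : 0 < T) (G g F u : ℝ → ℝ)
    (hGg : ∀ t ∈ Set.Icc (0 : ℝ) T, G t ≤ g t)
    (hFdiff : ∀ t ∈ Set.Icc (0 : ℝ) T, DifferentiableAt ℝ F t)
    (hudiff : ∀ t ∈ Set.Icc (0 : ℝ) T, DifferentiableAt ℝ u t)
    (hF' : ∀ t ∈ Set.Icc (0 : ℝ) T, deriv F t ≤ 2 * Real.sqrt (max (G t - F t) 0))
    (hu' : ∀ t ∈ Set.Icc (0 : ℝ) T, deriv u t = 2 * Real.sqrt (max (g t - u t) 0))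
    (h0 : F 0 ≤ u 0) :
    ∀ t ∈ Set.Icc (0 : ℝ) T, F t ≤ u t := by
  have key : ∀ ε > (0:ℝ), ∀ t ∈ Set.Icc (0 : ℝ) T, F t ≤ u t + ε * (1 + t) := by
    intro ε hε
    have hFc : ContinuousOn F (Set.Icc 0 T) := fun x hx =>
      (hFdiff x hx).continuousAt.continuousWithinAt
    have huc : ContinuousOn u (Set.Icc 0 T) := fun x hx =>
      (hudiff x hx).continuousAt.continuousWithinAt
    have hf' : ∀ x ∈ Set.Ico (0:ℝ) T, HasDerivWithinAt F (deriv F x) (Set.Ici x) x :=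
      fun x hx => ((hFdiff x (Set.Ico_subset_Icc_self hx)).hasDerivAt).hasDerivWithinAt
    have hB' : ∀ x ∈ Set.Ico (0:ℝ) T,
        HasDerivWithinAt (fun t => u t + ε * (1 + t)) (deriv u x + ε) (Set.Ici x) x := by
      intro x hx
      have h1 : HasDerivAt (fun t : ℝ => ε * (1 + t)) ε x := by
        simpa using ((hasDerivAt_id x).const_add (1:ℝ)).const_mul ε
      exact (((hudiff x (Set.Ico_subset_Icc_self hx)).hasDerivAt).add h1).hasDerivWithinAt
    refine fun t ht => image_le_of_deriv_right_lt_deriv_boundary' hFc hf' ?_ ?_ hB' ?_ ht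
    · nlinarith
    · exact huc.add (Continuous.continuousOn (by continuity))
    · intro x hx hFx
      have hx' := Set.Ico_subset_Icc_self hx
      have h1 : u x < F x := by nlinarith [hx.1]
      have h2 : max (G x - F x) 0 ≤ max (g x - u x) 0 :=
        max_le_max (by linarith [hGg x hx']) le_rfl
      have h3 : deriv F x ≤ deriv u x := by
        rw [hu' x hx']
        exact le_trans (hF' x hx') (by
          have := Real.sqrt_le_sqrt h2
          linarith)
      linarith
  intro t ht
  refine le_of_forall_pos_le_add fun δ hδ => ?_
  have h1t : (0:ℝ) < 1 + t := by linarith [ht.1]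
  have := key (δ / (1 + t)) (div_pos hδ h1t) t ht
  calc F t ≤ u t + δ / (1 + t) * (1 + t) := this
    _ = u t + δ := by field_simp
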